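/- If G is the Heisenberg group over Z/n, generated by a, b, c with relations a^n = b^n = c^n = 1, [a,c] = [b,c] = 1, and [a,b] = c, then every abelian subgroup A of G satisfies [G : A] ≥ n. -/

import Mathlib

/-!
The commutator of `x` and `y` in `Heisenberg n` is the central element `x.1 * y.2.1 - y.1 * x.2.1`,
so an abelian subgroup `A` has an image in `Heisenberg n / center ≅ (ZMod n)²` that is isotropic
for this form, and its fibres lie in cosets of the center, of order `n`. An isotropic subgroup
of `(ZMod n)²` has at most `n` elements: if `(a, b)` in it generates its image under the first
projection, that image is `range (a * ·)` and the kernel of the projection lies in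
`0 × ker (a * ·)`. Hence `|A| ≤ n²` and `[G : A] = n³ / |A| ≥ n`.
-/

/-- The mod-`n` Heisenberg group, as triples `(a, b, c)` of elements of `ZMod n`,
where `(a,b,c)` corresponds to the unipotent upper triangular matrix
`![![1, a, c], ![0, 1, b], ![0, 0, 1]]`. -/
def Heisenberg (n : ℕ) : Type := ZMod n × ZMod n × ZMod n

namespace Heisenberg

variable {n : ℕ}

instance : Mul (Heisenberg n) :=
  ⟨fun x y => (x.1 + y.1, x.2.1 + y.2.1, x.2.2 + y.2.2 + x.1 * y.2.1)⟩

instance : One (Heisenberg n) := ⟨((0 : ZMod n), (0 : ZMod n), (0 : ZMod n))⟩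

instance : Inv (Heisenberg n) := ⟨fun x => (-x.1, -x.2.1, -x.2.2 + x.1 * x.2.1)⟩

lemma mul_def (x y : Heisenberg n) :
    x * y = (x.1 + y.1, x.2.1 + y.2.1, x.2.2 + y.2.2 + x.1 * y.2.1) := rfl

lemma one_def : (1 : Heisenberg n) = ((0 : ZMod n), (0 : ZMod n), (0 : ZMod n)) := rfl

lemma inv_def (x : Heisenberg n) :
    x⁻¹ = (-x.1, -x.2.1, -x.2.2 + x.1 * x.2.1) := rfl

instance : Group (Heisenberg n) where
  mul_assoc a b c := by
    repeat rw [mul_def]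
    try rw [one_def]
    try rw [inv_def]
    refine Prod.ext ?_ (Prod.ext ?_ ?_) <;> (try dsimp) <;> ring
  one_mul a := by
    repeat rw [mul_def]
    try rw [one_def]
    try rw [inv_def]
    refine Prod.ext ?_ (Prod.ext ?_ ?_) <;> (try dsimp) <;> ring
  mul_one a := by
    repeat rw [mul_def]
    try rw [one_def]
    try rw [inv_def]
    refine Prod.ext ?_ (Prod.ext ?_ ?_) <;> (try dsimp) <;> ring
  inv_mul_cancel a := by
    repeat rw [mul_def]
    try rw [one_def]
    try rw [inv_def]
    refine Prod.ext ?_ (Prod.ext ?_ ?_) <;> (try dsimp) <;> ring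

end Heisenberg

namespace ZMod

variable {n : ℕ}

theorem range_mulLeft (a : ZMod n) :
    (AddMonoidHom.mulLeft a).range = AddSubgroup.zmultiples a := by
  ext x
  simp only [AddMonoidHom.mem_range, AddMonoidHom.coe_mulLeft, AddSubgroup.mem_zmultiples_iff]
  constructor
  · rintro ⟨y, rfl⟩
    obtain ⟨k, rfl⟩ := ZMod.intCast_surjective y
    exact ⟨k, by rw [zsmul_eq_mul, mul_comm]⟩
  · rintro ⟨k, rfl⟩
    exact ⟨k, by rw [zsmul_eq_mul, mul_comm]⟩

theorem exists_mem_eq_range_mulLeft (S : AddSubgroup (ZMod n)) :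
    ∃ a ∈ S, S = (AddMonoidHom.mulLeft a).range := by
  obtain ⟨⟨a, ha⟩, hgen⟩ := IsAddCyclic.exists_generator (α := S)
  refine ⟨a, ha, le_antisymm (fun x hx => ?_) ?_⟩
  · obtain ⟨k, hk⟩ := hgen ⟨x, hx⟩
    rw [range_mulLeft]
    exact ⟨k, congrArg Subtype.val hk⟩
  · rw [range_mulLeft, AddSubgroup.zmultiples_le]
    exact ha

theorem card_ker_mul_card_range (f : ZMod n →+ ZMod n) :
    Nat.card f.ker * Nat.card f.range = n := by
  rw [← AddSubgroup.index_ker, AddSubgroup.card_mul_index, Nat.card_zmod]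

theorem card_addSubgroup_le_of_isotropic [NeZero n] (H : AddSubgroup (ZMod n × ZMod n))
    (hH : ∀ p ∈ H, ∀ q ∈ H, p.1 * q.2 = q.1 * p.2) : Nat.card H ≤ n := by
  set f : H →+ ZMod n := (AddMonoidHom.fst _ _).comp H.subtype
  obtain ⟨_, ⟨p, rfl⟩, hrange⟩ := exists_mem_eq_range_mulLeft f.range
  set μ := AddMonoidHom.mulLeft (f p)
  have hker : Nat.card f.ker ≤ Nat.card μ.ker := by
    refine Nat.card_le_card_of_injective
      (fun q => ⟨q.1.1.2, show p.1.1 * q.1.1.2 = 0 by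
        rw [hH p.1 p.2 q.1.1 q.1.2, show q.1.1.1 = 0 from q.2, zero_mul]⟩) ?_
    intro q r hqr
    have hq : q.1.1.1 = 0 := q.2
    have hr : r.1.1.1 = 0 := r.2
    exact Subtype.ext (Subtype.ext (Prod.ext (hq.trans hr.symm) (congrArg Subtype.val hqr)))
  calc Nat.card H = Nat.card f.ker * Nat.card f.range := by
        rw [← AddSubgroup.index_ker, AddSubgroup.card_mul_index]
    _ ≤ Nat.card μ.ker * Nat.card μ.range := by rw [hrange]; gcongr
    _ = n := card_ker_mul_card_range μ

end ZMod

namespace Heisenberg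

variable {n : ℕ}

theorem mul_comm_iff {x y : Heisenberg n} : x * y = y * x ↔ x.1 * y.2.1 = y.1 * x.2.1 := by
  constructor
  · intro h
    have hz := congrArg (fun t : Heisenberg n => t.2.2) h
    simp only [mul_def] at hz
    linear_combination hz
  · intro h
    rw [mul_def, mul_def, h, add_comm x.1, add_comm x.2.1, add_comm x.2.2]

theorem card : Nat.card (Heisenberg n) = n ^ 3 := by
  rw [show Nat.card (Heisenberg n) = Nat.card (ZMod n × ZMod n × ZMod n) from rfl,
    Nat.card_prod, Nat.card_prod, Nat.card_zmod]
  ring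

def planeImage (A : Subgroup (Heisenberg n)) : AddSubgroup (ZMod n × ZMod n) where
  carrier := {p | ∃ z : ZMod n, ((p.1, p.2, z) : Heisenberg n) ∈ A}
  zero_mem' := ⟨0, A.one_mem⟩
  add_mem' := by
    rintro p q ⟨z, hz⟩ ⟨w, hw⟩
    exact ⟨z + w + p.1 * q.2, A.mul_mem hz hw⟩
  neg_mem' := by
    rintro p ⟨z, hz⟩
    exact ⟨-z + p.1 * p.2, A.inv_mem hz⟩

theorem planeImage_isotropic {A : Subgroup (Heisenberg n)}
    (hA : ∀ x ∈ A, ∀ y ∈ A, x * y = y * x) :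
    ∀ p ∈ planeImage A, ∀ q ∈ planeImage A, p.1 * q.2 = q.1 * p.2 := by
  rintro p ⟨z, hz⟩ q ⟨w, hw⟩
  exact mul_comm_iff.mp (hA _ hz _ hw)

theorem card_le_card_planeImage_mul [NeZero n] (A : Subgroup (Heisenberg n)) :
    Nat.card A ≤ Nat.card (planeImage A) * n :=
  calc Nat.card A ≤ Nat.card (planeImage A × ZMod n) := by
        refine Nat.card_le_card_of_injective
          (fun x => (⟨(x.1.1, x.1.2.1), x.1.2.2, x.2⟩, x.1.2.2)) fun x y hxy => ?_
        obtain ⟨hab, hc⟩ := Prod.mk.inj hxy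
        obtain ⟨ha, hb⟩ := Prod.mk.inj (congrArg Subtype.val hab)
        exact Subtype.ext (Prod.ext ha (Prod.ext hb hc))
    _ = Nat.card (planeImage A) * n := by rw [Nat.card_prod, Nat.card_zmod]

end Heisenberg

theorem heisenberg_abelian_subgroup_index_general (n : ℕ)
    (A : Subgroup (Heisenberg n)) (hA : ∀ x ∈ A, ∀ y ∈ A, x * y = y * x) :
    n ≤ A.index := by
  rcases Nat.eq_zero_or_pos n with rfl | hn
  · exact Nat.zero_le _
  have : NeZero n := ⟨hn.ne'⟩
  have hA_card : Nat.card A ≤ n ^ 2 := calc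
    Nat.card A ≤ Nat.card (Heisenberg.planeImage A) * n := Heisenberg.card_le_card_planeImage_mul A
    _ ≤ n * n := by
      gcongr
      exact ZMod.card_addSubgroup_le_of_isotropic _ (Heisenberg.planeImage_isotropic hA)
    _ = n ^ 2 := (sq n).symm
  refine Nat.le_of_mul_le_mul_left ?_ (pow_pos hn 2)
  calc n ^ 2 * n = Nat.card A * A.index := by rw [A.card_mul_index, Heisenberg.card]; ring
    _ ≤ n ^ 2 * A.index := by gcongr

/-- Every abelian subgroup of the mod-`n` Heisenberg group has index at least `n`. -/
theorem heisenberg_abelian_subgroup_index (n : ℕ) (hn : 1 ≤ n)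
    (A : Subgroup (Heisenberg n)) (hA : ∀ x ∈ A, ∀ y ∈ A, x * y = y * x) :
    n ≤ A.index :=
  heisenberg_abelian_subgroup_index_general n A hA
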